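/- arXiv:2010.04198 — 4 statements merged into one kernel-verified Lean document; each statement's English description precedes it below -/
import Mathlib

section
/- Let f : [0,1] → 2^[0,1] be upper semicontinuous with connected graph G(f). If f(x) is connected for every x ∈ [0,1], then f has the Weak Intermediate Value Property. -/
/-!
Upper semicontinuity with compact values makes the graph of `f` closed, hence compact. Over an
interval `I ⊆ [0,1]` it projects onto `I` with the connected values of `f` as fibres, and a compact
set with preconnected projection and preconnected fibres is preconnected: so the graph of `f` over
`uIcc x₁ x₂` is preconnected. Its projection to the second axis is then an interval containing
`y₁` and any `y₂ ∈ f x₂`, and every `y` in it lies in some `f x` with `x ∈ uIcc x₁ x₂`.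
-/

open Set

/-- Graph of a set-valued function on [0,1]. -/
def SVGraph (f : ℝ → Set ℝ) : Set (ℝ × ℝ) :=
  {p | p.1 ∈ Icc (0:ℝ) 1 ∧ p.2 ∈ f p.1}

/-- f has nonempty compact values contained in [0,1]. -/
def SV (f : ℝ → Set ℝ) : Prop :=
  ∀ x ∈ Icc (0:ℝ) 1, (f x).Nonempty ∧ IsCompact (f x) ∧ f x ⊆ Icc (0:ℝ) 1

/-- Upper semicontinuity on [0,1]. -/
def USC (f : ℝ → Set ℝ) : Prop :=
  ∀ x ∈ Icc (0:ℝ) 1, ∀ U : Set ℝ, IsOpen U → f x ⊆ U →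
    ∃ V : Set ℝ, IsOpen V ∧ x ∈ V ∧ ∀ v ∈ V ∩ Icc (0:ℝ) 1, f v ⊆ U

/-- Weak Intermediate Value Property. -/
def WIVP (f : ℝ → Set ℝ) : Prop :=
  ∀ x₁ ∈ Icc (0:ℝ) 1, ∀ x₂ ∈ Icc (0:ℝ) 1, x₁ ≠ x₂ → ∀ y₁ ∈ f x₁,
    ∃ y₂ ∈ f x₂, ∀ y ∈ uIcc y₁ y₂, ∃ x ∈ uIcc x₁ x₂, y ∈ f x

/-- Intermediate Value Property. -/
def IVP (f : ℝ → Set ℝ) : Prop :=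
  ∀ x₁ ∈ Icc (0:ℝ) 1, ∀ x₂ ∈ Icc (0:ℝ) 1, x₁ ≠ x₂ → ∀ y₁ ∈ f x₁, ∀ y₂ ∈ f x₂, y₁ ≠ y₂ →
    ∀ y ∈ Ioo (min y₁ y₂) (max y₁ y₂), ∃ x ∈ Ioo (min x₁ x₂) (max x₁ x₂), y ∈ f x

theorem IsCompact.isPreconnected_of_isPreconnected_fibers {X Y : Type*} [TopologicalSpace X]
    [TopologicalSpace Y] [T2Space Y] {s : Set X} {π : X → Y} (hs : IsCompact s)
    (hπ : ContinuousOn π s) (himage : IsPreconnected (π '' s))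
    (hfibers : ∀ y, IsPreconnected (s ∩ π ⁻¹' {y})) : IsPreconnected s := by
  refine isPreconnected_closed_iff.2 fun u v hu hv hsuv ⟨a, has, hau⟩ ⟨b, hbs, hbv⟩ => ?_
  have hclosed : ∀ {w : Set X}, IsClosed w → IsClosed (π '' (s ∩ w)) := fun hw =>
    ((hs.inter_right hw).image_of_continuousOn (hπ.mono inter_subset_left)).isClosed
  have hcover : π '' s ⊆ π '' (s ∩ u) ∪ π '' (s ∩ v) := by
    rw [← image_union, ← inter_union_distrib_left, inter_eq_left.2 hsuv]
  obtain ⟨_, -, ⟨c, ⟨hcs, hcu⟩, rfl⟩, ⟨d, ⟨hds, hdv⟩, hdc⟩⟩ :=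
    isPreconnected_closed_iff.1 himage _ _ (hclosed hu) (hclosed hv) hcover
      ⟨π a, mem_image_of_mem π has, a, ⟨has, hau⟩, rfl⟩
      ⟨π b, mem_image_of_mem π hbs, b, ⟨hbs, hbv⟩, rfl⟩
  obtain ⟨z, ⟨hzs, -⟩, hz⟩ :=
    isPreconnected_closed_iff.1 (hfibers (π c)) u v hu hv (inter_subset_left.trans hsuv)
      ⟨c, ⟨hcs, rfl⟩, hcu⟩ ⟨d, ⟨hds, hdc⟩, hdv⟩
  exact ⟨z, hzs, hz⟩

theorem isClosed_SVGraph {f : ℝ → Set ℝ} (husc : USC f)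
    (hclosed : ∀ x ∈ Icc (0:ℝ) 1, IsClosed (f x)) : IsClosed (SVGraph f) := by
  refine isOpen_compl_iff.1 (isOpen_iff_mem_nhds.2 fun p hp => ?_)
  by_cases hx : p.1 ∈ Icc (0:ℝ) 1
  · have hy : p.2 ∉ f p.1 := fun hy => hp ⟨hx, hy⟩
    obtain ⟨U, W, hU, hW, hpU, hfW, hUW⟩ :=
      SeparatedNhds.of_isCompact_isClosed isCompact_singleton (hclosed p.1 hx)
        (disjoint_singleton_left.2 hy)
    obtain ⟨V, hV, hpV, hVW⟩ := husc p.1 hx W hW hfW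
    filter_upwards [prod_mem_nhds (hV.mem_nhds hpV) (hU.mem_nhds (hpU rfl))]
      with q ⟨hqV, hqU⟩ ⟨hq, hqf⟩
    exact hUW.le_bot ⟨hqU, hVW q.1 ⟨hqV, hq⟩ hqf⟩
  · filter_upwards [(isClosed_Icc.preimage continuous_fst).isOpen_compl.mem_nhds hx]
      with q hq hqG
    exact hq hqG.1

theorem isCompact_SVGraph {f : ℝ → Set ℝ} (hSV : SV f) (husc : USC f) :
    IsCompact (SVGraph f) :=
  (isCompact_Icc.prod isCompact_Icc).of_isClosed_subset
    (isClosed_SVGraph husc fun x hx => (hSV x hx).2.1.isClosed)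
    fun p hp => ⟨hp.1, (hSV p.1 hp.1).2.2 hp.2⟩

theorem isPreconnected_SVGraph_inter_preimage_fst {f : ℝ → Set ℝ} (hSV : SV f) (husc : USC f)
    (hvals : ∀ x ∈ Icc (0:ℝ) 1, IsPreconnected (f x)) {s : Set ℝ} (hs : IsClosed s)
    (hs01 : s ⊆ Icc 0 1) (hsconn : IsPreconnected s) :
    IsPreconnected (SVGraph f ∩ Prod.fst ⁻¹' s) := by
  have himage : Prod.fst '' (SVGraph f ∩ Prod.fst ⁻¹' s) = s := by
    refine Subset.antisymm (fun _ ⟨p, hp, hpx⟩ => hpx ▸ hp.2) fun x hx => ?_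
    obtain ⟨y, hy⟩ := (hSV x (hs01 hx)).1
    exact ⟨(x, y), ⟨⟨hs01 hx, hy⟩, hx⟩, rfl⟩
  have hfibre : ∀ x ∈ s,
      SVGraph f ∩ Prod.fst ⁻¹' s ∩ Prod.fst ⁻¹' {x} = (fun y => (x, y)) '' f x := by
    intro x hx
    ext ⟨a, b⟩
    simp only [SVGraph, mem_inter_iff, mem_ofPred_eq, mem_preimage, mem_singleton_iff,
      mem_image, Prod.mk.injEq]
    constructor
    · rintro ⟨⟨⟨-, hb⟩, -⟩, rfl⟩
      exact ⟨b, hb, rfl, rfl⟩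
    · rintro ⟨b, hb, rfl, rfl⟩
      exact ⟨⟨⟨hs01 hx, hb⟩, hx⟩, rfl⟩
  refine ((isCompact_SVGraph hSV husc).inter_right (hs.preimage continuous_fst))
    |>.isPreconnected_of_isPreconnected_fibers continuous_fst.continuousOn (himage.symm ▸ hsconn)
      fun x => ?_
  by_cases hx : x ∈ s
  · rw [hfibre x hx]
    exact (hvals x (hs01 hx)).image _ (continuous_const.prodMk continuous_id).continuousOn
  · convert isPreconnected_empty
    exact eq_empty_of_forall_notMem fun p ⟨⟨_, hps⟩, hpx⟩ => hx (mem_singleton_iff.1 hpx ▸ hps)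

theorem stmt3_general (f : ℝ → Set ℝ) (hSV : SV f) (husc : USC f)
    (hvals : ∀ x ∈ Icc (0:ℝ) 1, IsConnected (f x)) :
    WIVP f := by
  intro x₁ hx₁ x₂ hx₂ _ y₁ hy₁
  obtain ⟨y₂, hy₂⟩ := (hSV x₂ hx₂).1
  have hS := isPreconnected_SVGraph_inter_preimage_fst hSV husc
    (fun x hx => (hvals x hx).isPreconnected) isClosed_Icc
    (ordConnected_Icc.uIcc_subset hx₁ hx₂) isPreconnected_uIcc
  refine ⟨y₂, hy₂, fun y hy => ?_⟩
  obtain ⟨p, ⟨⟨-, hp⟩, hpx⟩, rfl⟩ :=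
    (hS.image Prod.snd continuous_snd.continuousOn).ordConnected.uIcc_subset
      ⟨(x₁, y₁), ⟨⟨hx₁, hy₁⟩, left_mem_uIcc⟩, rfl⟩ ⟨(x₂, y₂), ⟨⟨hx₂, hy₂⟩, right_mem_uIcc⟩, rfl⟩ hy
  exact ⟨p.1, hpx, hp⟩

theorem stmt3 (f : ℝ → Set ℝ) (hSV : SV f) (husc : USC f)
    (hconn : IsConnected (SVGraph f))
    (hvals : ∀ x ∈ Icc (0:ℝ) 1, IsConnected (f x)) :
    WIVP f :=
  stmt3_general f hSV husc hvals
end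

section
/- Let f : [0,1] → 2^[0,1] be upper semicontinuous with the Intermediate Value Property. Then for all 0 ≤ a ≤ b ≤ 1, the set G(f) ∩ ([a,b] × [0,1]) is connected. -/
open Set

/-!
Each value `f x` is an interval: if `y₁ < m < y₂` with `y₁, y₂ ∈ f x` but `m ∉ f x`, upper
semicontinuity keeps `m` out of `f` on a neighbourhood of `x`, while any value `y'` of `f` at a
nearby point `x₂` lies on one side of `m`, so the Intermediate Value Property puts `m` into `f`
strictly between `x` and `x₂`. The graph over `[a, b]` is compact because it is closed, its
projection to the first coordinate is `[a, b]`, and a compact subset of a product with a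
preconnected projection and preconnected fibres is preconnected, since the projections of its
closed pieces stay closed.
-/

theorem IsCompact.isPreconnected_of_isPreconnected_fibers_s6 {X Y : Type*} [TopologicalSpace X]
    [T2Space X] [TopologicalSpace Y] {K : Set (X × Y)} (hK : IsCompact K)
    (hbase : IsPreconnected (Prod.fst '' K)) (hfib : ∀ x, IsPreconnected (Prod.mk x ⁻¹' K)) :
    IsPreconnected K := by
  rintro u v hu hv hKuv ⟨p, hpK, hpu⟩ ⟨q, hqK, hqv⟩
  by_contra huv
  have hdisj : ∀ z ∈ K, z ∈ u → z ∉ v := fun z hz hzu hzv => huv ⟨z, hz, hzu, hzv⟩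
  have hclosed : ∀ w, IsOpen w → IsClosed (Prod.fst '' (K \ w)) := fun w hw =>
    ((hK.diff hw).image continuous_fst).isClosed
  have hcover : Prod.fst '' K ⊆ Prod.fst '' (K \ v) ∪ Prod.fst '' (K \ u) := by
    rintro _ ⟨z, hz, rfl⟩
    by_cases hzv : z ∈ v
    · exact Or.inr ⟨z, ⟨hz, fun hzu => hdisj z hz hzu hzv⟩, rfl⟩
    · exact Or.inl ⟨z, ⟨hz, hzv⟩, rfl⟩
  obtain ⟨x, -, ⟨⟨x₁, y₁⟩, ⟨h₁K, h₁v⟩, rfl⟩, ⟨⟨x₂, y₂⟩, ⟨h₂K, h₂u⟩, hx₂⟩⟩ :=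
    isPreconnected_closed_iff.mp hbase _ _ (hclosed v hv) (hclosed u hu) hcover
      ⟨p.1, mem_image_of_mem _ hpK, p, ⟨hpK, hdisj p hpK hpu⟩, rfl⟩
      ⟨q.1, mem_image_of_mem _ hqK, q, ⟨hqK, fun hqu => hdisj q hqK hqu hqv⟩, rfl⟩
  obtain rfl : x₂ = x₁ := hx₂
  obtain ⟨y, hyK, hyu, hyv⟩ := hfib x₂ (Prod.mk x₂ ⁻¹' u) (Prod.mk x₂ ⁻¹' v)
    (hu.preimage (Continuous.prodMk_right x₂)) (hv.preimage (Continuous.prodMk_right x₂))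
    (fun y hy => hKuv hy) ⟨y₁, h₁K, (hKuv h₁K).resolve_right h₁v⟩
    ⟨y₂, h₂K, (hKuv h₂K).resolve_left h₂u⟩
  exact hdisj _ hyK hyu hyv

lemma exists_ne_mem_Icc_dist_lt {x ε : ℝ} (hx : x ∈ Icc (0 : ℝ) 1) (hε : 0 < ε) :
    ∃ x' ∈ Icc (0 : ℝ) 1, x' ≠ x ∧ dist x' x < ε := by
  set δ := min (ε / 2) (1 / 2)
  have hδ : 0 < δ := by positivity
  have hδε : δ < ε := (min_le_left _ _).trans_lt (half_lt_self hε)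
  have hδ₁ : δ ≤ 1 / 2 := min_le_right _ _
  rcases le_or_gt x (1 / 2) with h | h
  · refine ⟨x + δ, ⟨by linarith [hx.1], by linarith⟩, (lt_add_of_pos_right x hδ).ne', ?_⟩
    rwa [Real.dist_eq, add_sub_cancel_left, abs_of_pos hδ]
  · refine ⟨x - δ, ⟨by linarith, by linarith [hx.2]⟩, (sub_lt_self x hδ).ne, ?_⟩
    rwa [Real.dist_eq, sub_sub_cancel_left, abs_neg, abs_of_pos hδ]

variable {f : ℝ → Set ℝ}

lemma isClosed_SVGraph_s6 (hSV : SV f) (husc : USC f) : IsClosed (SVGraph f) := by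
  rw [← isOpen_compl_iff, isOpen_iff_mem_nhds]
  rintro ⟨x, y⟩ hxy
  by_cases hx : x ∈ Icc (0 : ℝ) 1
  · have hy : y ∉ f x := fun hy => hxy ⟨hx, hy⟩
    obtain ⟨U, W, hUo, hWo, hfU, hyW, hUW⟩ := SeparatedNhds.of_isCompact_isCompact
      (hSV x hx).2.1 isCompact_singleton (disjoint_singleton_right.mpr hy)
    obtain ⟨V, hVo, hxV, hV⟩ := husc x hx U hUo hfU
    filter_upwards [prod_mem_nhds (hVo.mem_nhds hxV) (hWo.mem_nhds (hyW rfl))]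
    rintro ⟨v, z⟩ ⟨hv, hz⟩ ⟨hv₀₁, hzf⟩
    exact disjoint_left.mp hUW (hV v ⟨hv, hv₀₁⟩ hzf) hz
  · filter_upwards [prod_mem_nhds (isClosed_Icc.isOpen_compl.mem_nhds hx) Filter.univ_mem]
    rintro ⟨v, z⟩ ⟨hv, -⟩ ⟨hv₀₁, -⟩
    exact hv hv₀₁

lemma ordConnected_of_IVP (hSV : SV f) (husc : USC f) (hivp : IVP f) {x : ℝ}
    (hx : x ∈ Icc (0 : ℝ) 1) : (f x).OrdConnected := by
  refine ⟨fun y₁ hy₁ y₂ hy₂ m hm => ?_⟩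
  by_contra hmx
  have h₁ : y₁ < m := hm.1.lt_of_ne (by rintro rfl; exact hmx hy₁)
  have h₂ : m < y₂ := hm.2.lt_of_ne (by rintro rfl; exact hmx hy₂)
  obtain ⟨V, hVo, hxV, hV⟩ := husc x hx {m}ᶜ isOpen_compl_singleton
    (fun y hy hym => hmx (hym ▸ hy))
  obtain ⟨ε, hε, hball⟩ := Metric.isOpen_iff.mp hVo x hxV
  obtain ⟨x₂, hx₂, hx₂x, hdist⟩ := exists_ne_mem_Icc_dist_lt hx hε
  have hS : (Metric.ball x ε ∩ Icc (0 : ℝ) 1).OrdConnected := by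
    rw [Real.ball_eq_Ioo]; infer_instance
  have hgap : ∀ x' ∈ Ioo (min x x₂) (max x x₂), m ∉ f x' := fun x' hx' hmx' => by
    have hx'S := hS.uIcc_subset ⟨Metric.mem_ball_self hε, hx⟩ ⟨hdist, hx₂⟩
      (Ioo_subset_Icc_self hx')
    exact hV x' ⟨hball hx'S.1, hx'S.2⟩ hmx' rfl
  obtain ⟨y', hy'⟩ := (hSV x₂ hx₂).1
  have hy'm : y' ≠ m := hV x₂ ⟨hball hdist, hx₂⟩ hy'
  obtain ⟨y, hy, hmy⟩ : ∃ y ∈ f x, m ∈ Ioo (min y y') (max y y') := by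
    rcases hy'm.lt_or_gt with hlt | hgt
    · exact ⟨y₂, hy₂, (min_le_right _ _).trans_lt hlt, h₂.trans_le (le_max_left _ _)⟩
    · exact ⟨y₁, hy₁, (min_le_left _ _).trans_lt h₁, hgt.trans_le (le_max_right _ _)⟩
  have hyy' : y ≠ y' := by rintro rfl; simp at hmy
  obtain ⟨x', hx', hmx'⟩ := hivp x hx x₂ hx₂ hx₂x.symm y hy y' hy' hyy' m hmy
  exact hgap x' hx' hmx'

theorem stmt6 (f : ℝ → Set ℝ) (hSV : SV f) (husc : USC f) (hivp : IVP f) :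
    ∀ a b : ℝ, 0 ≤ a → a ≤ b → b ≤ 1 →
      IsConnected (SVGraph f ∩ Icc a b ×ˢ Icc (0:ℝ) 1) := by
  intro a b ha hab hb
  set K := SVGraph f ∩ Icc a b ×ˢ Icc (0:ℝ) 1
  have hIcc : ∀ x ∈ Icc a b, x ∈ Icc (0 : ℝ) 1 := fun x hx => ⟨ha.trans hx.1, hx.2.trans hb⟩
  have hmem : ∀ x ∈ Icc a b, ∀ y, (x, y) ∈ K ↔ y ∈ f x := fun x hx y =>
    ⟨fun h => h.1.2, fun hy => ⟨⟨hIcc x hx, hy⟩, hx, (hSV x (hIcc x hx)).2.2 hy⟩⟩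
  have hbase : Prod.fst '' K = Icc a b := by
    refine Subset.antisymm (by rintro _ ⟨z, hz, rfl⟩; exact hz.2.1) fun x hx => ?_
    obtain ⟨y, hy⟩ := (hSV x (hIcc x hx)).1
    exact ⟨(x, y), (hmem x hx y).mpr hy, rfl⟩
  have hfib : ∀ x, IsPreconnected (Prod.mk x ⁻¹' K) := fun x => by
    by_cases hx : x ∈ Icc a b
    · rw [show Prod.mk x ⁻¹' K = f x from ext (hmem x hx)]
      exact (ordConnected_of_IVP hSV husc hivp (hIcc x hx)).isPreconnected
    · rw [show Prod.mk x ⁻¹' K = ∅ from eq_empty_of_forall_notMem fun y hy => hx hy.2.1]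
      exact isPreconnected_empty
  have hK : IsCompact K :=
    (isCompact_Icc.prod isCompact_Icc).inter_left (isClosed_SVGraph_s6 hSV husc)
  refine ⟨Nonempty.of_image (f := Prod.fst) ?_,
    hK.isPreconnected_of_isPreconnected_fibers_s6 ?_ hfib⟩
  · exact hbase ▸ nonempty_Icc.mpr hab
  · exact hbase ▸ isPreconnected_Icc
end

section
/- Define f : [0,1] → 2^[0,1] by f(x) = {1/4, 3x/4 + 1/4}. Then f is upper semicontinuous, has connected graph, and has the Weak Intermediate Value Property, but f is not surjective: no y ∈ [0, 1/4) belongs to f(x) for any x ∈ [0,1]. -/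
open Set

noncomputable def fNotSurj (x : ℝ) : Set ℝ := {1/4, 3*x/4 + 1/4}

/-! A multifunction whose values are `{g x, h x}` for two continuous branches `g`, `h` inherits
upper semicontinuity from the branches, has the Weak Intermediate Value Property by the
intermediate value theorem applied to the branch through `y₁`, and has a connected graph as soon
as the branches cross. For `fNotSurj` the branches are `1/4` and `3x/4 + 1/4`, which meet at `0`
and neither drops below `1/4` on `[0,1]`. -/

section PairOfBranches

variable {g h : ℝ → ℝ}

theorem usc_pair (hg : ContinuousOn g (Icc 0 1)) (hh : ContinuousOn h (Icc 0 1)) :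
    USC fun x => ({g x, h x} : Set ℝ) := by
  intro x hx U hU hxU
  obtain ⟨Vg, hVg, hgV⟩ := continuousOn_iff'.mp hg U hU
  obtain ⟨Vh, hVh, hhV⟩ := continuousOn_iff'.mp hh U hU
  have hxVg : x ∈ Vg ∩ Icc 0 1 := hgV ▸ ⟨hxU (mem_insert _ _), hx⟩
  have hxVh : x ∈ Vh ∩ Icc 0 1 := hhV ▸ ⟨hxU (mem_insert_of_mem _ rfl), hx⟩
  refine ⟨Vg ∩ Vh, hVg.inter hVh, ⟨hxVg.1, hxVh.1⟩, ?_⟩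
  rintro v ⟨⟨hvg, hvh⟩, hv⟩
  have hgv : v ∈ g ⁻¹' U ∩ Icc 0 1 := hgV ▸ ⟨hvg, hv⟩
  have hhv : v ∈ h ⁻¹' U ∩ Icc 0 1 := hhV ▸ ⟨hvh, hv⟩
  exact insert_subset hgv.1 (singleton_subset_iff.mpr hhv.1)

theorem wivp_pair (hg : ContinuousOn g (Icc 0 1)) (hh : ContinuousOn h (Icc 0 1)) :
    WIVP fun x => ({g x, h x} : Set ℝ) := by
  intro x₁ hx₁ x₂ hx₂ _ y₁ hy₁
  have branch : ∀ k : ℝ → ℝ, ContinuousOn k (Icc 0 1) → (∀ x, k x ∈ ({g x, h x} : Set ℝ)) →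
      ∃ y₂ ∈ ({g x₂, h x₂} : Set ℝ), ∀ y ∈ uIcc (k x₁) y₂, ∃ x ∈ uIcc x₁ x₂,
        y ∈ ({g x, h x} : Set ℝ) := by
    intro k hk hkf
    refine ⟨k x₂, hkf x₂, fun y hy => ?_⟩
    obtain ⟨x, hx, rfl⟩ := intermediate_value_uIcc (hk.mono (uIcc_subset_Icc hx₁ hx₂)) hy
    exact ⟨x, hx, hkf x⟩
  rcases hy₁ with rfl | rfl
  · exact branch g hg fun x => mem_insert _ _
  · exact branch h hh fun x => mem_insert_of_mem _ rfl

theorem svGraph_pair :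
    SVGraph (fun x => ({g x, h x} : Set ℝ)) =
      (fun x => (x, g x)) '' Icc 0 1 ∪ (fun x => (x, h x)) '' Icc 0 1 := by
  ext ⟨x, y⟩
  constructor
  · rintro ⟨hx, hy | hy⟩ <;> dsimp only at hx hy <;> subst hy
    exacts [Or.inl ⟨x, hx, rfl⟩, Or.inr ⟨x, hx, rfl⟩]
  · rintro (⟨x, hx, ⟨⟩⟩ | ⟨x, hx, ⟨⟩⟩)
    exacts [⟨hx, mem_insert _ _⟩, ⟨hx, mem_insert_of_mem _ rfl⟩]

theorem isConnected_svGraph_pair (hg : ContinuousOn g (Icc 0 1)) (hh : ContinuousOn h (Icc 0 1))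
    {x₀ : ℝ} (hx₀ : x₀ ∈ Icc (0 : ℝ) 1) (hgh : g x₀ = h x₀) :
    IsConnected (SVGraph fun x => ({g x, h x} : Set ℝ)) := by
  have branch : ∀ k : ℝ → ℝ, ContinuousOn k (Icc 0 1) →
      IsConnected ((fun x => (x, k x)) '' Icc 0 1) :=
    fun k hk => (isConnected_Icc zero_le_one).image _ (continuousOn_id.prodMk hk)
  rw [svGraph_pair]
  exact IsConnected.union ⟨(x₀, g x₀), ⟨x₀, hx₀, rfl⟩, ⟨x₀, hx₀, by rw [hgh]⟩⟩ (branch g hg)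
    (branch h hh)

end PairOfBranches

theorem stmt11 :
    USC fNotSurj ∧
    IsConnected (SVGraph fNotSurj) ∧
    WIVP fNotSurj ∧
    (∀ y ∈ Ico (0:ℝ) (1/4), ∀ x ∈ Icc (0:ℝ) 1, y ∉ fNotSurj x) := by
  have hg : ContinuousOn (fun _ : ℝ => (1 / 4 : ℝ)) (Icc 0 1) := continuousOn_const
  have hh : ContinuousOn (fun x : ℝ => 3 * x / 4 + 1 / 4) (Icc 0 1) := by fun_prop
  refine ⟨usc_pair hg hh, isConnected_svGraph_pair hg hh (left_mem_Icc.mpr zero_le_one)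
    (by norm_num), wivp_pair hg hh, ?_⟩
  rintro y ⟨-, hy⟩ x ⟨hx, -⟩ (rfl | rfl)
  · exact lt_irrefl _ hy
  · linarith
end

section
/- Let f : [0,1] → 2^[0,1] be upper semicontinuous with connected graph and having the Weak Intermediate Value Property. Then there exists a family F of upper semicontinuous functions g : [0,1] → C([0,1]) (each with nonempty compact connected values), each having the Weak Intermediate Value Property, such that G(f) = ∪_{g ∈ F} G(g). -/
open Set

/-!
Through a point `p` of the graph and for each mesh `1 / (n + 1)`, build a staircase: a chain of
boxes `[t i, t (i + 1)] × [[y i, y (i + 1)]]` over a grid containing `p.1`, whose corners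
`(t i, y i)` are produced from `p` by the weak intermediate value property, so that every height
of a box is a value of `f` over its base. Staircases are compact, project onto `[0, 1]`, lie
within `1 / (n + 1)` of the graph and have intermediate heights. Their limit along an
ultrafilter (not along a subsequence, so that any two limit points are approximated by the
same staircases) keeps the last two properties; as the graph is closed it lies in the graph,
and its vertical sections form a function `g` through `p` with interval values.
-/

theorem exists_nat_chain {α : Type*} (P : ℕ → Set α) (R : ℕ → α → α → Prop)
    (h : ∀ i, ∀ y ∈ P i, ∃ y' ∈ P (i + 1), R i y y') {b : α} (hb : b ∈ P 0) :
    ∃ y : ℕ → α, y 0 = b ∧ ∀ i, y i ∈ P i ∧ R i (y i) (y (i + 1)) := by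
  choose! F hFP hFR using h
  let y : ℕ → α := fun n => Nat.rec b (fun k yk => F k yk) n
  have hy : ∀ i, y i ∈ P i := fun i => by
    induction i with
    | zero => exact hb
    | succ k ih => exact hFP k _ ih
  exact ⟨y, rfl, fun i => ⟨hy i, hFR i _ (hy i)⟩⟩

theorem exists_int_chain {α : Type*} (P : ℤ → Set α) (R : ℤ → α → α → Prop)
    (hfwd : ∀ i, ∀ y ∈ P i, ∃ y' ∈ P (i + 1), R i y y')
    (hbwd : ∀ i, ∀ y' ∈ P (i + 1), ∃ y ∈ P i, R i y y') {b : α} (hb : b ∈ P 0) :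
    ∃ y : ℤ → α, y 0 = b ∧ ∀ i, y i ∈ P i ∧ R i (y i) (y (i + 1)) := by
  obtain ⟨yf, hyf0, hyf⟩ := exists_nat_chain (fun k => P k) (fun k => R k)
    (fun k y hy => by exact_mod_cast hfwd k y hy) hb
  obtain ⟨yb, hyb0, hyb⟩ := exists_nat_chain (fun k => P (-k)) (fun k y y' => R (-(k + 1)) y' y)
    (fun k y hy => by push_cast; exact hbwd (-(k + 1)) y (by simpa using hy)) (by simpa using hb)
  let y : ℤ → α := fun i => if 0 ≤ i then yf i.toNat else yb (-i).toNat
  have hy_nat (k : ℕ) : y k = yf k := by simp [y]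
  have hy_neg (k : ℕ) : y (-k) = yb k := by
    rcases k.eq_zero_or_pos with rfl | hk
    · simp [y, hyf0, hyb0]
    · simp [y, hk.ne']
  refine ⟨y, by simpa [hyf0] using hy_nat 0, fun i => ?_⟩
  obtain ⟨k, rfl | rfl⟩ := i.eq_nat_or_neg
  · rw [hy_nat, ← Nat.cast_succ, hy_nat]
    exact_mod_cast hyf k
  · rcases k with _ | k
    · simpa [← hy_nat] using hyf 0
    · have hmem := (hyb (k + 1)).1
      have hR := (hyb k).2
      simp only [← hy_neg] at hmem hR
      push_cast at hmem hR ⊢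
      rw [show -((k : ℤ) + 1) + 1 = -k by ring]
      exact ⟨hmem, hR⟩

def HasIntermediateHeights (S : Set (ℝ × ℝ)) : Prop :=
  ∀ p ∈ S, ∀ q ∈ S, ∀ c ∈ uIcc p.2 q.2, ∃ x ∈ uIcc p.1 q.1, (x, c) ∈ S

section Staircase

variable (t y : ℤ → ℝ) (m M : ℤ)

def staircase : Set (ℝ × ℝ) :=
  ⋃ i ∈ Ico m M, Icc (t i) (t (i + 1)) ×ˢ uIcc (y i) (y (i + 1))

variable {t y m M}

theorem isCompact_staircase : IsCompact (staircase t y m M) :=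
  (finite_Ico m M).isCompact_biUnion fun _ _ => isCompact_Icc.prod isCompact_uIcc

theorem staircase_subset_prod {I J : Set ℝ} (hI : I.OrdConnected) (hJ : J.OrdConnected)
    (ht : ∀ i, t i ∈ I) (hy : ∀ i, y i ∈ J) : staircase t y m M ⊆ I ×ˢ J :=
  iUnion₂_subset fun i _ => prod_mono (hI.out (ht i) (ht (i + 1)))
    (hJ.uIcc_subset (hy i) (hy (i + 1)))

theorem exists_mem_staircase (ht : Monotone t) (hmM : m < M) {x : ℝ}
    (hx : x ∈ Icc (t m) (t M)) : ∃ y', (x, y') ∈ staircase t y m M := by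
  obtain ⟨i, hi, hxi⟩ : ∃ i ∈ Ico m M, x ∈ Icc (t i) (t (i + 1)) := by
    rcases hx.1.eq_or_lt with rfl | hlt
    · exact ⟨m, ⟨le_rfl, hmM⟩, le_rfl, ht (Int.le_add_one le_rfl)⟩
    · have hx' : x ∈ ⋃ i ∈ Ico m M, Ioc (t i) (t (Order.succ i)) := by
        rw [ht.biUnion_Ico_Ioc_map_succ]
        exact ⟨hlt, hx.2⟩
      obtain ⟨i, hi, hxi⟩ := mem_iUnion₂.1 hx'
      exact ⟨i, hi, Ioc_subset_Icc_self hxi⟩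
  exact ⟨y i, mem_biUnion hi ⟨hxi, left_mem_uIcc⟩⟩

/-- Between the boxes `j < k` containing `p` and `q`, the boxes cut down to the strip
`[p.1, q.1] × ℝ` form a chain of convex sets, consecutive ones sharing a corner
`(t (i + 1), y (i + 1))`; their union is connected, so its projection to the second axis
is an interval. -/
theorem hasIntermediateHeights_staircase (ht : Monotone t) :
    HasIntermediateHeights (staircase t y m M) := by
  intro p hp q hq c hc
  obtain ⟨j, hj, hpj⟩ := mem_iUnion₂.1 hp
  obtain ⟨k, hk, hqk⟩ := mem_iUnion₂.1 hq
  wlog hjk : j ≤ k generalizing p q j k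
  · obtain ⟨x, hx, hxc⟩ := this q hq p hp (uIcc_comm p.2 q.2 ▸ hc) k hk hqk j hj hpj
      (le_of_not_ge hjk)
    exact ⟨x, uIcc_comm q.1 p.1 ▸ hx, hxc⟩
  rcases hjk.eq_or_lt with rfl | hlt
  · exact ⟨p.1, left_mem_uIcc, mem_biUnion hj ⟨hpj.1, uIcc_subset_uIcc hpj.2 hqk.2 hc⟩⟩
  have hpq : p.1 ≤ q.1 := hpj.1.2.trans ((ht hlt).trans hqk.1.1)
  let box (i : ℤ) := (Icc (t i) (t (i + 1)) ×ˢ uIcc (y i) (y (i + 1))) ∩ (Icc p.1 q.1 ×ˢ univ)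
  have hchain : IsPreconnected (⋃ i ∈ Icc j k, box i) := by
    refine IsPreconnected.biUnion_of_chain ordConnected_Icc
      (fun i _ => (((convex_Icc _ _).prod (convex_uIcc _ _)).inter
        ((convex_Icc _ _).prod convex_univ)).isPreconnected) fun i hi hi' => ?_
    have hi1 : i + 1 ≤ k := hi'.2
    exact ⟨(t (i + 1), y (i + 1)),
      ⟨⟨⟨ht (Int.le_add_one le_rfl), le_rfl⟩, right_mem_uIcc⟩,
        ⟨hpj.1.2.trans (ht (by linarith [hi.1])), (ht hi1).trans hqk.1.1⟩, trivial⟩,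
      ⟨⟨⟨le_rfl, ht (Int.le_add_one le_rfl)⟩, left_mem_uIcc⟩,
        ⟨hpj.1.2.trans (ht (by linarith [hi.1])), (ht hi1).trans hqk.1.1⟩, trivial⟩⟩
  have hc' : c ∈ Prod.snd '' ⋃ i ∈ Icc j k, box i :=
    (hchain.image _ continuous_snd.continuousOn).ordConnected.uIcc_subset
      ⟨p, mem_biUnion ⟨le_rfl, hjk⟩ ⟨hpj, ⟨le_rfl, hpq⟩, trivial⟩, rfl⟩
      ⟨q, mem_biUnion ⟨hjk, le_rfl⟩ ⟨hqk, ⟨hpq, le_rfl⟩, trivial⟩, rfl⟩ hc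
  obtain ⟨r, hr, rfl⟩ := hc'
  obtain ⟨i, hi, hri, hrpq, -⟩ := mem_iUnion₂.1 hr
  exact ⟨r.1, uIcc_of_le hpq ▸ hrpq, mem_biUnion ⟨hj.1.trans hi.1, hi.2.trans_lt hk.2⟩ hri⟩

end Staircase

section Ultralimit

open Filter Topology Metric

variable {ι X : Type*} [PseudoMetricSpace X] {U : Ultrafilter ι} {S : ι → Set X}

def ultralimitSet (U : Ultrafilter ι) (S : ι → Set X) : Set X :=
  {q | ∀ ε > 0, ∀ᶠ n in U, q ∈ thickening ε (S n)}

theorem isClosed_ultralimitSet : IsClosed (ultralimitSet U S) := by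
  refine isClosed_of_closure_subset fun q hq ε hε => ?_
  obtain ⟨q', hq', hqq'⟩ := Metric.mem_closure_iff.1 hq (ε / 2) (half_pos hε)
  filter_upwards [hq' (ε / 2) (half_pos hε)] with n hn
  obtain ⟨z, hz, hz'⟩ := mem_thickening_iff.1 hn
  exact mem_thickening_iff.2 ⟨z, hz, by linarith [dist_triangle q q' z]⟩

theorem mem_ultralimitSet_of_tendsto {γ : ι → X} {q : X} (hγ : ∀ᶠ n in U, γ n ∈ S n)
    (h : Tendsto γ U (𝓝 q)) : q ∈ ultralimitSet U S := fun ε hε => by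
  filter_upwards [hγ, Metric.tendsto_nhds.1 h ε hε] with n hn hd
  exact mem_thickening_iff.2 ⟨γ n, hn, by rwa [dist_comm]⟩

theorem exists_tendsto_of_mem_ultralimitSet (hS : ∀ n, IsCompact (S n))
    (hne : ∀ n, (S n).Nonempty) {q : X} (hq : q ∈ ultralimitSet U S) :
    ∃ γ : ι → X, (∀ n, γ n ∈ S n) ∧ Tendsto γ U (𝓝 q) := by
  choose γ hγ hdist using fun n => (hS n).exists_infDist_eq_dist (hne n) q
  refine ⟨γ, hγ, Metric.tendsto_nhds.2 fun ε hε => ?_⟩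
  filter_upwards [hq ε hε] with n hn
  rw [dist_comm, ← hdist]
  exact (infDist_lt_iff (hne n)).2 (mem_thickening_iff.1 hn)

theorem exists_mem_ultralimitSet_tendsto {K : Set X} (hK : IsCompact K) (hSK : ∀ n, S n ⊆ K)
    {γ : ι → X} (hγ : ∀ n, γ n ∈ S n) : ∃ q ∈ ultralimitSet U S, Tendsto γ U (𝓝 q) := by
  obtain ⟨q, -, hq⟩ := hK.ultrafilter_le_nhds (U.map γ)
    (le_principal_iff.2 (Ultrafilter.mem_map.2 (univ_mem' fun n => hSK n (hγ n))))
  exact ⟨q, mem_ultralimitSet_of_tendsto (univ_mem' hγ) hq, hq⟩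

theorem ultralimitSet_subset_of_dist_le {C : Set X} (hC : IsClosed C) {δ : ι → ℝ}
    (hδ : Tendsto δ U (𝓝 0)) (h : ∀ n, ∀ p ∈ S n, ∃ q ∈ C, dist p q ≤ δ n) :
    ultralimitSet U S ⊆ C := by
  intro q hq
  refine hC.closure_subset (Metric.mem_closure_iff.2 fun ε hε => ?_)
  obtain ⟨n, hn, hδn⟩ := ((hq (ε / 2) (half_pos hε)).and
    (hδ.eventually (gt_mem_nhds (half_pos hε)))).exists
  obtain ⟨p, hp, hqp⟩ := mem_thickening_iff.1 hn
  obtain ⟨c, hc, hpc⟩ := h n p hp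
  exact ⟨c, hc, by linarith [dist_triangle q p c]⟩

end Ultralimit

section IntermediateHeights

open Filter Topology

theorem mem_uIcc_of_tendsto {ι α : Type*} [LinearOrder α] [TopologicalSpace α]
    [OrderClosedTopology α] {l : Filter ι} [l.NeBot] {u a b : ι → α} {x a₀ b₀ : α}
    (hu : Tendsto u l (𝓝 x)) (ha : Tendsto a l (𝓝 a₀)) (hb : Tendsto b l (𝓝 b₀))
    (h : ∀ n, u n ∈ uIcc (a n) (b n)) : x ∈ uIcc a₀ b₀ :=
  ⟨le_of_tendsto_of_tendsto' (ha.min hb) hu fun n => (h n).1,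
    le_of_tendsto_of_tendsto' hu (ha.max hb) fun n => (h n).2⟩

variable {ι : Type*} {U : Ultrafilter ι} {S : ι → Set (ℝ × ℝ)}

/-- To reach a height `c` between those of two limit points, clamp `c` to the heights of their
approximants, apply the property in `S n`, and pass to the limit. -/
theorem HasIntermediateHeights.ultralimitSet {K : Set (ℝ × ℝ)} (hK : IsCompact K)
    (hSK : ∀ n, S n ⊆ K) (hS : ∀ n, IsCompact (S n)) (hne : ∀ n, (S n).Nonempty)
    (h : ∀ n, HasIntermediateHeights (S n)) : HasIntermediateHeights (ultralimitSet U S) := by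
  intro p hp q hq c hc
  obtain ⟨γ, hγS, hγ⟩ := exists_tendsto_of_mem_ultralimitSet hS hne hp
  obtain ⟨γ', hγ'S, hγ'⟩ := exists_tendsto_of_mem_ultralimitSet hS hne hq
  let c' (n : ι) : ℝ := max (min (γ n).2 (γ' n).2) (min c (max (γ n).2 (γ' n).2))
  have hc'mem (n : ι) : c' n ∈ uIcc (γ n).2 (γ' n).2 :=
    ⟨le_max_left _ _, max_le min_le_max (min_le_right _ _)⟩
  have hc' : Tendsto c' U (𝓝 c) := by
    have h2 := (hγ.snd_nhds.min hγ'.snd_nhds).max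
      ((tendsto_const_nhds (x := c)).min (hγ.snd_nhds.max hγ'.snd_nhds))
    rwa [min_eq_left hc.2, max_eq_right hc.1] at h2
  choose ξ hξ hξS using fun n => h n _ (hγS n) _ (hγ'S n) (c' n) (hc'mem n)
  obtain ⟨r, hr, hξr⟩ := exists_mem_ultralimitSet_tendsto hK hSK hξS
  have hr2 : r.2 = c := tendsto_nhds_unique hξr.snd_nhds hc'
  refine ⟨r.1, mem_uIcc_of_tendsto hξr.fst_nhds hγ.fst_nhds hγ'.fst_nhds hξ, ?_⟩
  rwa [← hr2]

end IntermediateHeights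

section SetValued

open Filter Topology

theorem svGraph_subset {f : ℝ → Set ℝ} (hSV : SV f) :
    SVGraph f ⊆ Icc (0 : ℝ) 1 ×ˢ Icc (0 : ℝ) 1 :=
  fun p hp => ⟨hp.1, (hSV p.1 hp.1).2.2 hp.2⟩

/-- At a point `p` of the closure, separate `p.2` from the compact set `f p.1` by open sets;
upper semicontinuity keeps `f v` inside the first one for `v` near `p.1`. -/
theorem isClosed_svGraph {f : ℝ → Set ℝ} (hSV : SV f) (husc : USC f) :
    IsClosed (SVGraph f) := by
  refine isClosed_of_closure_subset fun p hp => ?_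
  have hp1 : p.1 ∈ Icc (0 : ℝ) 1 :=
    (closure_mono (svGraph_subset hSV) |>.trans
      (isClosed_Icc.prod isClosed_Icc).closure_subset hp).1
  refine ⟨hp1, by_contra fun hp2 => ?_⟩
  obtain ⟨s, hs, W, hW, hsW⟩ :=
    Filter.disjoint_iff.1 ((hSV p.1 hp1).2.1.disjoint_nhdsSet_nhds hp2)
  obtain ⟨O, hO, hfO, hOs⟩ := mem_nhdsSet_iff_exists.1 hs
  obtain ⟨V, hV, hpV, hVO⟩ := husc p.1 hp1 O hO hfO
  obtain ⟨r, hrVW, hr⟩ := mem_closure_iff_nhds.1 hp _ (prod_mem_nhds (hV.mem_nhds hpV) hW)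
  exact hsW.ne_of_mem (hOs (hVO r.1 ⟨hrVW.1, hr.1⟩ hr.2)) hrVW.2 rfl

theorem WIVP.exists_mem_forall_mem_uIcc {f : ℝ → Set ℝ} (hf : WIVP f) {x₁ x₂ : ℝ}
    (hx₁ : x₁ ∈ Icc (0 : ℝ) 1) (hx₂ : x₂ ∈ Icc (0 : ℝ) 1) {y₁ : ℝ} (hy₁ : y₁ ∈ f x₁) :
    ∃ y₂ ∈ f x₂, ∀ y ∈ uIcc y₁ y₂, ∃ x ∈ uIcc x₁ x₂, y ∈ f x := by
  rcases eq_or_ne x₁ x₂ with rfl | hne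
  · refine ⟨y₁, hy₁, fun y hy => ⟨x₁, left_mem_uIcc, ?_⟩⟩
    rw [uIcc_self, mem_singleton_iff] at hy
    rwa [hy]
  · exact hf x₁ hx₁ x₂ hx₂ hne y₁ hy₁

def verticalSection (S : Set (ℝ × ℝ)) (x : ℝ) : Set ℝ := Prod.mk x ⁻¹' S

variable {S : Set (ℝ × ℝ)}

theorem svGraph_verticalSection (hS : ∀ p ∈ S, p.1 ∈ Icc (0 : ℝ) 1) :
    SVGraph (verticalSection S) = S :=
  Subset.antisymm (fun _ hp => hp.2) fun p hp => ⟨hS p hp, hp⟩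

theorem isCompact_verticalSection (hS : IsCompact S) (x : ℝ) :
    IsCompact (verticalSection S x) :=
  (hS.image continuous_snd).of_isClosed_subset (hS.isClosed.preimage (by fun_prop))
    fun y hy => ⟨(x, y), hy, rfl⟩

theorem usc_verticalSection (hS : IsCompact S) : USC (verticalSection S) := by
  intro x _ O hO hxO
  have hC : IsClosed (Prod.fst '' (S ∩ univ ×ˢ Oᶜ)) :=
    ((hS.inter_right (isClosed_univ.prod hO.isClosed_compl)).image continuous_fst).isClosed
  refine ⟨_, hC.isOpen_compl, ?_, fun v hv y hy => by_contra fun hyO => hv.1 ?_⟩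
  · rintro ⟨r, ⟨hrS, -, hrO⟩, rfl⟩
    exact hrO (hxO hrS)
  · exact ⟨(v, y), ⟨hy, trivial, hyO⟩, rfl⟩

theorem HasIntermediateHeights.ordConnected_verticalSection (hS : HasIntermediateHeights S)
    (x : ℝ) : (verticalSection S x).OrdConnected := by
  refine ordConnected_iff_uIcc_subset.2 fun y hy y' hy' c hc => ?_
  obtain ⟨ξ, hξ, hξc⟩ := hS _ hy _ hy' c hc
  rw [uIcc_self, mem_singleton_iff] at hξ
  rwa [hξ] at hξc

theorem HasIntermediateHeights.wivp_verticalSection (hS : HasIntermediateHeights S)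
    (hne : ∀ x ∈ Icc (0 : ℝ) 1, (verticalSection S x).Nonempty) :
    WIVP (verticalSection S) := by
  intro x₁ _ x₂ hx₂ _ y₁ hy₁
  obtain ⟨y₂, hy₂⟩ := hne x₂ hx₂
  exact ⟨y₂, hy₂, fun y hy => hS _ hy₁ _ hy₂ y hy⟩

end SetValued

section Grid

noncomputable def unitGrid (a : ℝ) (n : ℕ) (i : ℤ) : ℝ :=
  projIcc 0 1 zero_le_one (a + i / (n + 1))

variable {a : ℝ} {n : ℕ}

theorem unitGrid_mem (i : ℤ) : unitGrid a n i ∈ Icc (0 : ℝ) 1 := Subtype.prop _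

theorem monotone_unitGrid : Monotone (unitGrid a n) := fun i j hij =>
  monotone_projIcc zero_le_one (show a + i / (n + 1) ≤ a + j / (n + 1) by gcongr)

theorem unitGrid_zero (ha : a ∈ Icc (0 : ℝ) 1) : unitGrid a n 0 = a := by
  simp [unitGrid, projIcc_of_mem _ ha]

theorem unitGrid_neg_succ (ha : a ∈ Icc (0 : ℝ) 1) : unitGrid a n (-(n + 1)) = 0 := by
  have : a + ((-(n + 1) : ℤ) : ℝ) / (n + 1) ≤ 0 := by
    push_cast
    rw [neg_div, div_self (by positivity)]
    linarith [ha.2]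
  simp only [unitGrid, projIcc_of_le_left _ this]

theorem unitGrid_succ (ha : a ∈ Icc (0 : ℝ) 1) : unitGrid a n (n + 1) = 1 := by
  have : 1 ≤ a + (((n + 1 : ℤ)) : ℝ) / (n + 1) := by
    push_cast
    rw [div_self (by positivity)]
    linarith [ha.1]
  simp only [unitGrid, projIcc_of_right_le _ this]

theorem unitGrid_add_one_sub_le (i : ℤ) :
    unitGrid a n (i + 1) - unitGrid a n i ≤ 1 / (n + 1) := by
  have h : a + ((i + 1 : ℤ) : ℝ) / (n + 1) - (a + i / (n + 1)) = 1 / (n + 1) := by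
    push_cast
    ring
  refine (le_abs_self _).trans ((abs_projIcc_sub_projIcc _).trans_eq ?_)
  rw [h, abs_of_pos (by positivity)]

end Grid

section Decomposition

open Filter Topology

variable {f : ℝ → Set ℝ}

theorem WIVP.exists_chain (hf : WIVP f) {t : ℤ → ℝ} (ht : Monotone t)
    (ht01 : ∀ i, t i ∈ Icc (0 : ℝ) 1) {b : ℝ} (hb : b ∈ f (t 0)) :
    ∃ y : ℤ → ℝ, y 0 = b ∧ ∀ i, y i ∈ f (t i) ∧
      ∀ c ∈ uIcc (y i) (y (i + 1)), ∃ x ∈ Icc (t i) (t (i + 1)), c ∈ f x := by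
  have hle (i : ℤ) : t i ≤ t (i + 1) := ht (Int.le_add_one le_rfl)
  refine exists_int_chain (fun i => f (t i))
    (fun i y₁ y₂ => ∀ c ∈ uIcc y₁ y₂, ∃ x ∈ Icc (t i) (t (i + 1)), c ∈ f x)
    (fun i y₁ hy₁ => ?_) (fun i y₂ hy₂ => ?_) hb
  · obtain ⟨y₂, hy₂, hc⟩ := hf.exists_mem_forall_mem_uIcc (ht01 i) (ht01 (i + 1)) hy₁
    exact ⟨y₂, hy₂, by rwa [uIcc_of_le (hle i)] at hc⟩
  · obtain ⟨y₁, hy₁, hc⟩ := hf.exists_mem_forall_mem_uIcc (ht01 (i + 1)) (ht01 i) hy₂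
    exact ⟨y₁, hy₁, by rwa [uIcc_comm y₂, uIcc_of_ge (hle i)] at hc⟩

theorem exists_staircase_near_svGraph (hSV : SV f) (hf : WIVP f) {p : ℝ × ℝ}
    (hp : p ∈ SVGraph f) (n : ℕ) :
    ∃ S : Set (ℝ × ℝ), p ∈ S ∧ S ⊆ Icc (0 : ℝ) 1 ×ˢ Icc (0 : ℝ) 1 ∧ IsCompact S ∧
      HasIntermediateHeights S ∧ (∀ x ∈ Icc (0 : ℝ) 1, ∃ y, (x, y) ∈ S) ∧
      ∀ q ∈ S, ∃ r ∈ SVGraph f, dist q r ≤ 1 / (n + 1) := by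
  obtain ⟨a, b⟩ := p
  obtain ⟨ha, hb : b ∈ f a⟩ := hp
  have ht0 : unitGrid a n 0 = a := unitGrid_zero ha
  obtain ⟨y, hy0, hy⟩ := hf.exists_chain monotone_unitGrid unitGrid_mem (ht0 ▸ hb)
  refine ⟨staircase (unitGrid a n) y (-(n + 1)) (n + 1), ?_,
    staircase_subset_prod ordConnected_Icc ordConnected_Icc unitGrid_mem
      fun i => (hSV _ (unitGrid_mem i)).2.2 (hy i).1,
    isCompact_staircase, hasIntermediateHeights_staircase monotone_unitGrid,
    fun x hx => exists_mem_staircase monotone_unitGrid (by omega)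
      (by rwa [unitGrid_neg_succ ha, unitGrid_succ ha]), fun q hq => ?_⟩
  · exact mem_biUnion (show (0 : ℤ) ∈ Ico (-(n + 1 : ℤ)) (n + 1) by constructor <;> omega)
      ⟨⟨ht0.le, ht0.symm.le.trans (monotone_unitGrid (Int.le_add_one le_rfl))⟩,
        hy0 ▸ left_mem_uIcc⟩
  obtain ⟨i, -, hq1, hq2⟩ := mem_iUnion₂.1 hq
  obtain ⟨x, hx, hqx⟩ := (hy i).2 q.2 hq2
  refine ⟨(x, q.2), ⟨⟨(unitGrid_mem i).1.trans hx.1, hx.2.trans (unitGrid_mem _).2⟩, hqx⟩, ?_⟩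
  have hmesh := unitGrid_add_one_sub_le (a := a) (n := n) i
  rw [Prod.dist_eq, dist_self, Real.dist_eq]
  exact max_le (abs_sub_le_iff.2 ⟨by linarith [hq1.2, hx.1], by linarith [hq1.1, hx.2]⟩)
    (by positivity)

theorem exists_hasIntermediateHeights_subset_svGraph (hSV : SV f) (husc : USC f) (hf : WIVP f)
    {p : ℝ × ℝ} (hp : p ∈ SVGraph f) :
    ∃ K : Set (ℝ × ℝ), p ∈ K ∧ K ⊆ SVGraph f ∧ IsCompact K ∧ HasIntermediateHeights K ∧
      ∀ x ∈ Icc (0 : ℝ) 1, (verticalSection K x).Nonempty := by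
  choose S hpS hSsq hScpt hSIH hSspan hSnear using exists_staircase_near_svGraph hSV hf hp
  let U := Ultrafilter.of (atTop : Filter ℕ)
  have hsq : IsCompact (Icc (0 : ℝ) 1 ×ˢ Icc (0 : ℝ) 1) := isCompact_Icc.prod isCompact_Icc
  have hKf : ultralimitSet U S ⊆ SVGraph f :=
    ultralimitSet_subset_of_dist_le (isClosed_svGraph hSV husc)
      (tendsto_one_div_add_atTop_nhds_zero_nat.mono_left (Ultrafilter.of_le _)) hSnear
  refine ⟨ultralimitSet U S, mem_ultralimitSet_of_tendsto (univ_mem' hpS) tendsto_const_nhds,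
    hKf, hsq.of_isClosed_subset isClosed_ultralimitSet (hKf.trans (svGraph_subset hSV)),
    HasIntermediateHeights.ultralimitSet hsq hSsq hScpt (fun n => ⟨p, hpS n⟩) hSIH,
    fun x hx => ?_⟩
  choose y hy using fun n => hSspan n x hx
  obtain ⟨r, hr, hyr⟩ := exists_mem_ultralimitSet_tendsto hsq hSsq hy
  have hrx : r.1 = x := tendsto_nhds_unique hyr.fst_nhds tendsto_const_nhds
  exact ⟨r.2, show (x, r.2) ∈ _ by rwa [← hrx]⟩

end Decomposition

theorem stmt15_general (f : ℝ → Set ℝ) (hSV : SV f) (husc : USC f)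
    (hwivp : WIVP f) :
    ∃ F : Set (ℝ → Set ℝ),
      (∀ g ∈ F, USC g ∧
        (∀ x ∈ Icc (0:ℝ) 1,
          (g x).Nonempty ∧ IsCompact (g x) ∧ IsConnected (g x) ∧ g x ⊆ Icc (0:ℝ) 1) ∧
        WIVP g) ∧
      SVGraph f = ⋃ g ∈ F, SVGraph g := by
  refine ⟨verticalSection '' {K | K ⊆ SVGraph f ∧ IsCompact K ∧ HasIntermediateHeights K ∧
    ∀ x ∈ Icc (0 : ℝ) 1, (verticalSection K x).Nonempty}, ?_, ?_⟩
  · rintro _ ⟨K, ⟨hKf, hK, hKIH, hne⟩, rfl⟩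
    refine ⟨usc_verticalSection hK, fun x hx => ⟨hne x hx, isCompact_verticalSection hK x,
      ⟨hne x hx, (hKIH.ordConnected_verticalSection x).isPreconnected⟩,
      fun y hy => (svGraph_subset hSV (hKf hy)).2⟩, hKIH.wivp_verticalSection hne⟩
  refine Subset.antisymm (fun p hp => ?_) (iUnion₂_subset ?_)
  · obtain ⟨K, hpK, hK⟩ := exists_hasIntermediateHeights_subset_svGraph hSV husc hwivp hp
    refine mem_biUnion ⟨K, hK, rfl⟩ ?_
    rwa [svGraph_verticalSection fun q hq => (hK.1 hq).1]
  · rintro _ ⟨K, ⟨hKf, -⟩, rfl⟩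
    rwa [svGraph_verticalSection fun q hq => (hKf hq).1]

theorem stmt15 (f : ℝ → Set ℝ) (hSV : SV f) (husc : USC f)
    (hconn : IsConnected (SVGraph f)) (hwivp : WIVP f) :
    ∃ F : Set (ℝ → Set ℝ),
      (∀ g ∈ F, USC g ∧
        (∀ x ∈ Icc (0:ℝ) 1,
          (g x).Nonempty ∧ IsCompact (g x) ∧ IsConnected (g x) ∧ g x ⊆ Icc (0:ℝ) 1) ∧
        WIVP g) ∧
      SVGraph f = ⋃ g ∈ F, SVGraph g :=
  stmt15_general f hSV husc hwivp
end
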